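/- Two permutations of ℕ are conjugate in Sym(ℕ) if and only if their cycle functions are equal, i.e. for each ι ∈ (ℕ \ {0}) ∪ {∞} they have the same number of cycles of length ι. -/

import Mathlib

/-- The cycle (orbit) of `x` under the permutation `ρ`. -/
def orbitOf (ρ : Equiv.Perm ℕ) (x : ℕ) : Set ℕ := {y | ∃ k : ℤ, (ρ ^ k) x = y}

/-- The set of cycles of `ρ`. -/
def cyclesOf (ρ : Equiv.Perm ℕ) : Set (Set ℕ) := Set.range (orbitOf ρ)

/-- The number (in `ℕ ∪ {∞}`) of cycles of `ρ` of length `ι`. -/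
noncomputable def cycleCount (ρ : Equiv.Perm ℕ) (ι : ℕ∞) : ℕ∞ :=
  {s | s ∈ cyclesOf ρ ∧ s.encard = ι}.encard

/-!
A permutation `ρ` of `α` makes `α` a `ℤ`-set, and an orbit whose minimal period is `n` is
`ℤ`-equivariantly `ZMod n` (with `ZMod 0 = ℤ` for the infinite cycles). Hence `α` is the disjoint
union over the cycles of `ZMod (period)`, with `ρ` acting as `+ 1` in each summand, and a bijection
between the cycles of `ρ₁` and of `ρ₂` preserving periods assembles into a conjugator. On `ℕ` there
are countably many cycles, so equal cycle counts give such a bijection fibre by fibre.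
-/

universe u

open MulAction Subgroup Function

namespace Equiv.Perm

variable {α : Type*}

noncomputable def equivSigmaZMod (ρ : Perm α) :
    α ≃ Σ q : orbitRel.Quotient (zpowers ρ) α, ZMod (minimalPeriod ρ q.out) :=
  (selfEquivSigmaOrbits (zpowers ρ) α).trans
    (Equiv.sigmaCongrRight fun q => orbitZPowersEquiv ρ q.out)

lemma equivSigmaZMod_symm_apply_intCast (ρ : Perm α) (q : orbitRel.Quotient (zpowers ρ) α)
    (k : ℤ) : (equivSigmaZMod ρ).symm ⟨q, k⟩ = (ρ ^ k) q.out := by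
  change ((orbitZPowersEquiv ρ q.out).symm k : α) = _
  rw [orbitZPowersEquiv_symm_apply']
  rfl

lemma equivSigmaZMod_symm_add_one (ρ : Perm α) (q : orbitRel.Quotient (zpowers ρ) α)
    (k : ZMod (minimalPeriod ρ q.out)) :
    (equivSigmaZMod ρ).symm ⟨q, k + 1⟩ = ρ ((equivSigmaZMod ρ).symm ⟨q, k⟩) := by
  obtain ⟨m, rfl⟩ := ZMod.intCast_surjective k
  rw [← Int.cast_one, ← Int.cast_add, equivSigmaZMod_symm_apply_intCast,
    equivSigmaZMod_symm_apply_intCast, add_comm, zpow_one_add, mul_apply]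

theorem isConj_of_equiv_orbitRelQuotient {ρ₁ ρ₂ : Perm α}
    (e : orbitRel.Quotient (zpowers ρ₁) α ≃ orbitRel.Quotient (zpowers ρ₂) α)
    (he : ∀ q, minimalPeriod ρ₁ q.out = minimalPeriod ρ₂ (e q).out) : IsConj ρ₁ ρ₂ := by
  let σ : Perm α := (equivSigmaZMod ρ₁).trans <|
    (Equiv.sigmaCongr e fun q => (ZMod.ringEquivCongr (he q)).toEquiv).trans
      (equivSigmaZMod ρ₂).symm
  have hσ : ∀ x, σ (ρ₁ x) = ρ₂ (σ x) := by
    intro x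
    obtain ⟨⟨q, k⟩, rfl⟩ := (equivSigmaZMod ρ₁).symm.surjective x
    rw [← equivSigmaZMod_symm_add_one]
    simp only [σ, sigmaCongr, trans_apply, apply_symm_apply, sigmaCongrRight_apply,
      sigmaCongrLeft_apply, RingEquiv.toEquiv_eq_coe, EquivLike.coe_coe, map_add, map_one,
      ← equivSigmaZMod_symm_add_one]
  refine isConj_iff.mpr ⟨σ, Equiv.ext fun x => ?_⟩
  simp only [coe_mul, coe_inv, comp_apply, hσ, apply_symm_apply]

lemma minimalPeriod_out_eq_ncard_orbit (ρ : Perm α) (q : orbitRel.Quotient (zpowers ρ) α) :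
    minimalPeriod ρ q.out = q.orbit.ncard := by
  rw [orbitRel.Quotient.orbit_eq_orbit_out q Quotient.out_eq', ← Nat.card_coe_set_eq,
    Nat.card_congr (orbitZPowersEquiv ρ q.out), Nat.card_zmod]
  rfl

end Equiv.Perm

theorem ENat.nonempty_equiv_of_card_eq {S T : Type u} [Countable S] [Countable T]
    (h : ENat.card S = ENat.card T) : Nonempty (S ≃ T) :=
  Cardinal.eq.mp <|
    (Cardinal.toENat_eq_iff_of_le_aleph0 Cardinal.mk_le_aleph0 Cardinal.mk_le_aleph0).mp h

theorem Equiv.exists_comp_eq_of_enatCard_fiber_eq {S T : Type u} {κ : Type*}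
    [Countable S] [Countable T] {f : S → κ} {g : T → κ}
    (h : ∀ i, ENat.card {s // f s = i} = ENat.card {t // g t = i}) :
    ∃ e : S ≃ T, ∀ s, g (e s) = f s :=
  ⟨.ofFiberEquiv fun i => (ENat.nonempty_equiv_of_card_eq (h i)).some, ofFiberEquiv_map _⟩

lemma orbitOf_eq_orbit (ρ : Equiv.Perm ℕ) (x : ℕ) : orbitOf ρ x = orbit (zpowers ρ) x := by
  ext y
  simp only [orbitOf, Set.mem_ofPred_eq, mem_orbit_iff, exists_zpowers]
  rfl

lemma orbitOf_conj_apply (ρ σ : Equiv.Perm ℕ) (x : ℕ) :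
    orbitOf (σ * ρ * σ⁻¹) (σ x) = σ '' orbitOf ρ x := by
  ext y
  simp [orbitOf, conj_zpow, ← Equiv.eq_symm_apply]

lemma cyclesOf_conj (ρ σ : Equiv.Perm ℕ) : cyclesOf (σ * ρ * σ⁻¹) = Set.image σ '' cyclesOf ρ := by
  rw [cyclesOf, cyclesOf, ← Set.range_comp, ← σ.surjective.range_comp]
  exact congrArg Set.range (funext (orbitOf_conj_apply ρ σ))

lemma cycleCount_conj (ρ σ : Equiv.Perm ℕ) (ι : ℕ∞) :
    cycleCount (σ * ρ * σ⁻¹) ι = cycleCount ρ ι := by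
  have hfib : {s | s ∈ cyclesOf (σ * ρ * σ⁻¹) ∧ s.encard = ι} =
      Set.image σ '' {s | s ∈ cyclesOf ρ ∧ s.encard = ι} := by
    rw [cyclesOf_conj]
    change Set.image σ '' cyclesOf ρ ∩ {s | s.encard = ι} = _
    rw [← Set.image_inter_preimage]
    simp only [Set.preimage_ofPred_eq, σ.injective.encard_image]
    rfl
  rw [cycleCount, cycleCount, hfib, (Set.image_injective.mpr σ.injective).encard_image]

lemma cycleCount_eq_enatCard (ρ : Equiv.Perm ℕ) (ι : ℕ∞) :
    cycleCount ρ ι = ENat.card {q : orbitRel.Quotient (zpowers ρ) ℕ // q.orbit.encard = ι} := by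
  have hcycles : cyclesOf ρ = Set.range (orbitRel.Quotient.orbit (G := zpowers ρ)) := by
    rw [cyclesOf, funext (orbitOf_eq_orbit ρ), ← Quotient.mk''_surjective.range_comp]
    rfl
  have hfib : {s | s ∈ cyclesOf ρ ∧ s.encard = ι} =
      orbitRel.Quotient.orbit '' {q : orbitRel.Quotient (zpowers ρ) ℕ | q.orbit.encard = ι} := by
    rw [hcycles]
    exact Set.image_preimage_eq_range_inter.symm
  rw [cycleCount, hfib, orbitRel.Quotient.orbit_injective.encard_image]
  rfl

lemma cycleCount_zero (ρ : Equiv.Perm ℕ) : cycleCount ρ 0 = 0 := by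
  rw [cycleCount_eq_enatCard, ENat.card_eq_zero_iff_empty]
  exact ⟨fun q => q.1.nonempty_orbit.encard_pos.ne' q.2⟩

lemma isConj_of_cycleCount_eq {γ₁ γ₂ : Equiv.Perm ℕ}
    (h : ∀ ι, cycleCount γ₁ ι = cycleCount γ₂ ι) : IsConj γ₁ γ₂ := by
  obtain ⟨e, he⟩ := Equiv.exists_comp_eq_of_enatCard_fiber_eq
    (f := fun q : orbitRel.Quotient (zpowers γ₁) ℕ => q.orbit.encard)
    (g := fun q : orbitRel.Quotient (zpowers γ₂) ℕ => q.orbit.encard)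
    fun ι => by rw [← cycleCount_eq_enatCard, ← cycleCount_eq_enatCard, h]
  refine Equiv.Perm.isConj_of_equiv_orbitRelQuotient e fun q => ?_
  rw [Equiv.Perm.minimalPeriod_out_eq_ncard_orbit, Equiv.Perm.minimalPeriod_out_eq_ncard_orbit,
    Set.ncard, Set.ncard, he]

/-- two permutations of `ℕ` are conjugate iff their cycle functions
agree on every `ι ∈ (ℕ \ {0}) ∪ {∞}`. -/
theorem stmt4 (γ₁ γ₂ : Equiv.Perm ℕ) :
    IsConj γ₁ γ₂ ↔ ∀ ι : ℕ∞, ι ≠ 0 → cycleCount γ₁ ι = cycleCount γ₂ ι := by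
  refine ⟨fun h ι _ => ?_, fun h => isConj_of_cycleCount_eq fun ι => ?_⟩
  · obtain ⟨σ, rfl⟩ := isConj_iff.mp h
    exact (cycleCount_conj γ₁ σ ι).symm
  · rcases eq_or_ne ι 0 with rfl | hι
    · rw [cycleCount_zero, cycleCount_zero]
    · exact h ι hι
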